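/- There exists a universal constant c₁ such that for all n ≥ 10, the partition function of the complete-graph Ising model at β = ln n satisfies Z = ∑_{k=0}^n C(n,k)·exp(−(2 ln n / n)·k(n−k)) ≤ c₁. -/

import Mathlib

/-!
Write `m = min k (n - k)`. The `k`-th term equals `C(n, m) · exp(-(2 ln n / n) m (n - m))`, and
since `2m ≤ n` the exponential is at most `n^(-m)`, which cancels `C(n, m) ≤ n^m / m!`. Hence the
`k`-th term is at most `1/k! + 1/(n-k)!`, and the whole sum is at most `2e`.
-/

open Finset Real
open scoped Nat

/-- The weight `π̂_k` of the subsets of size `k` of an `n`-element set. -/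
noncomputable def isingWeight (n k : ℕ) : ℝ :=
  (n.choose k : ℝ) * exp (-(2 * log n / n) * k * (n - k : ℝ))

lemma isingWeight_symm {n k : ℕ} (hk : k ≤ n) : isingWeight n (n - k) = isingWeight n k := by
  rw [isingWeight, isingWeight, Nat.choose_symm hk, Nat.cast_sub hk]
  ring_nf

lemma pow_mul_exp_neg_le_one {n m : ℕ} (hm : 2 * m ≤ n) :
    (n : ℝ) ^ m * exp (-(2 * log n / n) * m * (n - m : ℝ)) ≤ 1 := by
  rcases Nat.eq_zero_or_pos n with rfl | hn
  · obtain rfl : m = 0 := by omega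
    simp
  have hn' : (0 : ℝ) < n := Nat.cast_pos.mpr hn
  have hexponent : m * log n + -(2 * log n / n) * m * (n - m : ℝ)
      = m * log n * (2 * m - n) / n := by
    field_simp
    ring
  have hmn : (2 * m : ℝ) ≤ n := by exact_mod_cast hm
  rw [← exp_log (pow_pos hn' m), log_pow, ← exp_add, exp_le_one_iff, hexponent]
  exact div_nonpos_of_nonpos_of_nonneg
    (mul_nonpos_of_nonneg_of_nonpos (by positivity) (by linarith)) hn'.le

lemma isingWeight_le_inv_factorial {n k : ℕ} (hk : 2 * k ≤ n) :
    isingWeight n k ≤ (k ! : ℝ)⁻¹ :=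
  calc isingWeight n k
      ≤ (n : ℝ) ^ k / k ! * exp (-(2 * log n / n) * k * (n - k : ℝ)) := by
        unfold isingWeight
        gcongr
        exact Nat.choose_le_pow_div k n
    _ = ((n : ℝ) ^ k * exp (-(2 * log n / n) * k * (n - k : ℝ))) * (k ! : ℝ)⁻¹ := by ring
    _ ≤ (k ! : ℝ)⁻¹ := mul_le_of_le_one_left (by positivity) (pow_mul_exp_neg_le_one hk)

lemma isingWeight_le {n k : ℕ} (hk : k ≤ n) :
    isingWeight n k ≤ (k ! : ℝ)⁻¹ + ((n - k) ! : ℝ)⁻¹ := by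
  rcases le_total (2 * k) n with h | h
  · have := isingWeight_le_inv_factorial h
    have : (0 : ℝ) ≤ ((n - k) ! : ℝ)⁻¹ := by positivity
    linarith
  · have := isingWeight_le_inv_factorial (n := n) (k := n - k) (by omega)
    have : (0 : ℝ) ≤ (k ! : ℝ)⁻¹ := by positivity
    linarith [isingWeight_symm hk]

lemma sum_inv_factorial_le_exp_one (N : ℕ) : ∑ k ∈ range N, (k ! : ℝ)⁻¹ ≤ exp 1 := by
  simpa using sum_le_exp_of_nonneg zero_le_one N

/-- There is a universal constant `c₁` bounding the partition function of the
complete-graph Ising model at `β = ln n`, for all `n ≥ 10`. -/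
theorem ising_partition_bounded :
    ∃ c₁ : ℝ, ∀ n : ℕ, 10 ≤ n →
      ∑ k ∈ Finset.range (n + 1),
          (n.choose k : ℝ) * Real.exp (-(2 * Real.log n / n) * k * (n - k : ℝ)) ≤ c₁ := by
  refine ⟨2 * exp 1, fun n _ => ?_⟩
  change ∑ k ∈ range (n + 1), isingWeight n k ≤ _
  calc ∑ k ∈ range (n + 1), isingWeight n k
      ≤ ∑ k ∈ range (n + 1), ((k ! : ℝ)⁻¹ + ((n - k) ! : ℝ)⁻¹) :=
        sum_le_sum fun k hk => isingWeight_le (Nat.lt_succ_iff.mp (mem_range.mp hk))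
    _ = 2 * ∑ k ∈ range (n + 1), (k ! : ℝ)⁻¹ := by
        rw [sum_add_distrib, ← sum_range_reflect (fun k => (k ! : ℝ)⁻¹) (n + 1)]
        simp only [add_tsub_cancel_right]
        ring
    _ ≤ 2 * exp 1 := by gcongr; exact sum_inv_factorial_le_exp_one _
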